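/- arXiv:2408.08057 — 4 statements merged into one kernel-verified Lean document; each statement's English description precedes it below -/
import Mathlib

section
/- (Proposition 1) Suppose (w_1,…,w_K, q^dl, q^ul) is feasible for problem (P1). Define q̃^ul_m ≜ (β/M)·s + β·σ_z² for every m = 1,…,M, where s = Re(a_tᴴ Σ_g R Σ_gᴴ a_t). Then the point (w_1,…,w_K, q^dl, q̃^ul) is also feasible for (P1), has the same objective value Tr(R), satisfies every UL fronthaul constraint (iii) with equality, and satisfies q̃^ul_m ≤ q^ul_m for every m. -/
/-! Shrinking the UL compression noise levels can only increase the sensing gain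
`Re(a_rᴴ (Diag(q^ul) + σ_z² I)⁻¹ a_r) = ∑ₘ |a_r,m|² / (q^ul_m + σ_z²)`, while `s` and `Tr(R)` do
not depend on `q^ul` at all. The level `q̃^ul` is exactly the one making every UL fronthaul
constraint tight, so it lies below any feasible `q^ul`, and the sensing SINR survives. -/

open Matrix Finset

noncomputable section

namespace NetworkedISAC

variable {N M K : ℕ}

/-- The transmit covariance matrix `R = ∑ₖ wₖ wₖᴴ + Diag(q^dl)`. -/
def Rmat (w : Fin K → Fin N → ℂ) (qdl : Fin N → ℝ) : Matrix (Fin N) (Fin N) ℂ :=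
  (∑ k, vecMulVec (w k) (star (w k))) + diagonal (fun n => (qdl n : ℂ))

/-- `s = Re(a_tᴴ Σ_g R Σ_gᴴ a_t)`. -/
def sVal (at_ : Fin N → ℂ) (Sg : Matrix (Fin N) (Fin N) ℂ)
    (w : Fin K → Fin N → ℂ) (qdl : Fin N → ℝ) : ℝ :=
  (star at_ ⬝ᵥ (Sg * Rmat w qdl * Sgᴴ).mulVec at_).re

/-- Feasibility for problem (P1). -/
def FeasibleP1 (Cdl Cul σv2 σz2 Γs : ℝ) (Γ : Fin K → ℝ)
    (h : Fin K → Fin N → ℂ) (at_ : Fin N → ℂ) (Sg : Matrix (Fin N) (Fin N) ℂ)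
    (ar : Fin M → ℂ)
    (w : Fin K → Fin N → ℂ) (qdl : Fin N → ℝ) (qul : Fin M → ℝ) : Prop :=
  (∀ n, 0 ≤ qdl n) ∧ (∀ m, 0 ≤ qul m) ∧
  -- (i) DL fronthaul constraints
  (∀ n, ∑ k, Complex.normSq (w k n) ≤ (2 ^ Cdl - 1) * qdl n) ∧
  -- (ii) communication SINR constraints
  (∀ k, Complex.normSq (star (h k) ⬝ᵥ w k) ≥
      Γ k * ((∑ i ∈ univ.erase k, Complex.normSq (star (h k) ⬝ᵥ w i)) +
        (star (h k) ⬝ᵥ (diagonal fun n => (qdl n : ℂ)).mulVec (h k)).re + σv2)) ∧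
  -- (iii) UL fronthaul constraints
  (∀ _m : Fin M, sVal at_ Sg w qdl + M * σz2 ≤ (2 ^ Cul - 1) * M * qul _m) ∧
  -- (iv) sensing SINR constraint
  (sVal at_ Sg w qdl *
      (star ar ⬝ᵥ ((diagonal (fun m => (qul m : ℂ)) + (σz2 : ℂ) • 1)⁻¹).mulVec ar).re
    ≥ Γs)

section SensingGain

variable {ι : Type*} [Fintype ι] [DecidableEq ι]

def sensingGain (a : ι → ℂ) (σ : ℝ) (q : ι → ℝ) : ℝ :=
  (star a ⬝ᵥ ((diagonal fun i => (q i : ℂ)) + (σ : ℂ) • 1)⁻¹ *ᵥ a).re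

lemma sensingGain_eq_sum (a : ι → ℂ) {σ : ℝ} {q : ι → ℝ} (hq : ∀ i, q i + σ ≠ 0) :
    sensingGain a σ q = ∑ i, Complex.normSq (a i) / (q i + σ) := by
  have hdiag : (diagonal fun i => (q i : ℂ)) + (σ : ℂ) • 1
      = diagonal fun i => ((q i + σ : ℝ) : ℂ) := by
    rw [smul_one_eq_diagonal, diagonal_add]
    push_cast
    rfl
  have hinv : (diagonal fun i => ((q i + σ : ℝ) : ℂ))⁻¹
      = diagonal fun i => (((q i + σ)⁻¹ : ℝ) : ℂ) := by
    refine inv_eq_left_inv ?_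
    rw [diagonal_mul_diagonal, ← diagonal_one]
    congr 1
    ext i
    push_cast
    exact inv_mul_cancel₀ (mod_cast hq i)
  rw [sensingGain, hdiag, hinv]
  simp only [dotProduct, mulVec_diagonal, Complex.re_sum]
  refine sum_congr rfl fun i _ => ?_
  simp only [Pi.star_apply, Complex.star_def, Complex.mul_re, Complex.mul_im, Complex.conj_re,
    Complex.conj_im, Complex.ofReal_re, Complex.ofReal_im, Complex.normSq_apply]
  ring

lemma sensingGain_nonneg (a : ι → ℂ) {σ : ℝ} {q : ι → ℝ} (hq : ∀ i, 0 < q i + σ) :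
    0 ≤ sensingGain a σ q := by
  rw [sensingGain_eq_sum a fun i => (hq i).ne']
  exact sum_nonneg fun i _ => div_nonneg (Complex.normSq_nonneg _) (hq i).le

lemma sensingGain_le_of_le (a : ι → ℂ) {σ : ℝ} {q q' : ι → ℝ} (hq' : ∀ i, 0 < q' i + σ)
    (hle : ∀ i, q' i ≤ q i) : sensingGain a σ q ≤ sensingGain a σ q' := by
  have hq : ∀ i, 0 < q i + σ := fun i => (hq' i).trans_le (by linarith [hle i])
  rw [sensingGain_eq_sum a fun i => (hq i).ne', sensingGain_eq_sum a fun i => (hq' i).ne']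
  exact sum_le_sum fun i _ =>
    div_le_div_of_nonneg_left (Complex.normSq_nonneg _) (hq' i) (by linarith [hle i])

lemma sensingGain_of_isEmpty [IsEmpty ι] (a : ι → ℂ) (σ : ℝ) (q : ι → ℝ) :
    sensingGain a σ q = 0 := by
  simp [sensingGain, dotProduct]

end SensingGain

/-- With `c = 2^{C^ul} - 1`, this is `q̃^ul_m = (β/M)·s + β·σ_z²` for `β = 1/c`. -/
def tightULNoise (c σ s : ℝ) (M : ℕ) : ℝ :=
  (1 / c) / M * s + (1 / c) * σ

lemma mul_tightULNoise {c σ : ℝ} (s : ℝ) {M : ℕ} (hc : c ≠ 0) (hM : M ≠ 0) :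
    c * M * tightULNoise c σ s M = s + M * σ := by
  unfold tightULNoise
  field_simp

lemma tightULNoise_nonneg {c σ s : ℝ} (M : ℕ) (hc : 0 ≤ c) (hσ : 0 ≤ σ) (hs : 0 ≤ s) :
    0 ≤ tightULNoise c σ s M := by
  unfold tightULNoise
  positivity

theorem proposition1_general
    (Cdl Cul σv2 σz2 Γs : ℝ) (Γ : Fin K → ℝ)
    (hCul : 0 < Cul) (hσz2 : 0 < σz2)
    (hΓs : 0 < Γs)
    (h : Fin K → Fin N → ℂ) (at_ : Fin N → ℂ) (Sg : Matrix (Fin N) (Fin N) ℂ)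
    (ar : Fin M → ℂ)
    (w : Fin K → Fin N → ℂ) (qdl : Fin N → ℝ) (qul : Fin M → ℝ)
    (hfeas : FeasibleP1 Cdl Cul σv2 σz2 Γs Γ h at_ Sg ar w qdl qul) :
    FeasibleP1 Cdl Cul σv2 σz2 Γs Γ h at_ Sg ar w qdl
      (fun _ => (1 / (2 ^ Cul - 1)) / M * sVal at_ Sg w qdl + (1 / (2 ^ Cul - 1)) * σz2) ∧
    (Rmat w qdl).trace = (Rmat w qdl).trace ∧
    (∀ _m : Fin M, sVal at_ Sg w qdl + M * σz2 =
      (2 ^ Cul - 1) * M *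
        ((1 / (2 ^ Cul - 1)) / M * sVal at_ Sg w qdl + (1 / (2 ^ Cul - 1)) * σz2)) ∧
    (∀ m : Fin M,
      (1 / (2 ^ Cul - 1)) / M * sVal at_ Sg w qdl + (1 / (2 ^ Cul - 1)) * σz2 ≤ qul m) := by
  obtain ⟨hqdl, hqul, hdl, hsinr, hul, hsens⟩ := hfeas
  change Γs ≤ _ * sensingGain ar σz2 qul at hsens
  set s := sVal at_ Sg w qdl
  set qt := tightULNoise (2 ^ Cul - 1) σz2 s M
  -- `Γs > 0` forces both `s > 0` and `M ≠ 0`, which the tight level needs.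
  have hsensing_pos : 0 < s * sensingGain ar σz2 qul := hΓs.trans_le hsens
  have hs : 0 < s :=
    pos_of_mul_pos_left hsensing_pos (sensingGain_nonneg ar fun m => by linarith [hqul m])
  have hM : 0 < M := Nat.pos_of_ne_zero fun hM0 => by
    subst hM0
    simp [sensingGain_of_isEmpty] at hsensing_pos
  have hc : 0 < (2 : ℝ) ^ Cul - 1 := by linarith [Real.one_lt_rpow one_lt_two hCul]
  have htight : (2 ^ Cul - 1) * M * qt = s + M * σz2 := mul_tightULNoise s hc.ne' hM.ne'
  have hqt_le : ∀ m, qt ≤ qul m := fun m =>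
    le_of_mul_le_mul_left (htight ▸ hul m) (by positivity)
  have hqt_nonneg : 0 ≤ qt := tightULNoise_nonneg M hc.le hσz2.le hs.le
  refine ⟨⟨hqdl, fun _ => hqt_nonneg, hdl, hsinr, fun _ => htight.ge, ?_⟩, rfl,
    fun _ => htight.symm, hqt_le⟩
  calc Γs ≤ s * sensingGain ar σz2 qul := hsens
    _ ≤ s * sensingGain ar σz2 (fun _ => qt) :=
      mul_le_mul_of_nonneg_left (sensingGain_le_of_le ar (fun _ => by positivity) hqt_le) hs.le

/-- **Proposition 1.**  If `(w, q^dl, q^ul)` is feasible for (P1), then replacing the UL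
compression noise levels with `q̃^ul_m = (β/M)·s + β·σ_z²`, where `β = 1/(2^{C^ul}-1)`,
yields a point that is still feasible for (P1), has the same objective value `Tr(R)`,
satisfies all UL fronthaul constraints (iii) with equality, and satisfies
`q̃^ul_m ≤ q^ul_m` for every `m`. -/
theorem proposition1
    (Cdl Cul σv2 σz2 Γs : ℝ) (Γ : Fin K → ℝ)
    (hCdl : 0 < Cdl) (hCul : 0 < Cul) (hσv2 : 0 < σv2) (hσz2 : 0 < σz2)
    (hΓs : 0 < Γs) (hΓ : ∀ k, 0 < Γ k)
    (h : Fin K → Fin N → ℂ) (at_ : Fin N → ℂ) (Sg : Matrix (Fin N) (Fin N) ℂ)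
    (ar : Fin M → ℂ) (har : ∀ m, Complex.normSq (ar m) = 1 / M)
    (w : Fin K → Fin N → ℂ) (qdl : Fin N → ℝ) (qul : Fin M → ℝ)
    (hfeas : FeasibleP1 Cdl Cul σv2 σz2 Γs Γ h at_ Sg ar w qdl qul) :
    FeasibleP1 Cdl Cul σv2 σz2 Γs Γ h at_ Sg ar w qdl
      (fun _ => (1 / (2 ^ Cul - 1)) / M * sVal at_ Sg w qdl + (1 / (2 ^ Cul - 1)) * σz2) ∧
    (Rmat w qdl).trace = (Rmat w qdl).trace ∧
    (∀ _m : Fin M, sVal at_ Sg w qdl + M * σz2 =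
      (2 ^ Cul - 1) * M *
        ((1 / (2 ^ Cul - 1)) / M * sVal at_ Sg w qdl + (1 / (2 ^ Cul - 1)) * σz2)) ∧
    (∀ m : Fin M,
      (1 / (2 ^ Cul - 1)) / M * sVal at_ Sg w qdl + (1 / (2 ^ Cul - 1)) * σz2 ≤ qul m) :=
  proposition1_general Cdl Cul σv2 σz2 Γs Γ hCul hσz2 hΓs h at_ Sg ar w qdl qul hfeas

end NetworkedISAC
end
end

section
/- (Proposition 4, part 2: positive definiteness of C at dual-feasible points) Let λ ∈ ℝ and μ ∈ ℝ^K with μ_k > 0 for every k. Assume that the vectors h_1,…,h_K span ℂ^N and that μ is feasible for the dual problem (D2), i.e., for every k and every w ∈ ℂ^N one has μ_k·Γ̃_k·|h_kᴴ w|² ≤ Re(wᴴ C(λ,μ) w). Then C(λ,μ) is positive definite. -/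
open Matrix Finset ComplexOrder

noncomputable section

namespace DualPD

variable {N K : ℕ}

/-- `H_k = h_k h_kᴴ`. -/
def Hmat (h : Fin N → ℂ) : Matrix (Fin N) (Fin N) ℂ :=
  vecMulVec h (star h)

/-- `A_k = H_k + α·diag(H_k)`. -/
def Amat (α : ℝ) (h : Fin N → ℂ) : Matrix (Fin N) (Fin N) ℂ :=
  Hmat h + (α : ℂ) • diagonal (fun n => Hmat h n n)

/-- `C(λ,μ) = I − λ·B + ∑ᵢ μᵢ·Aᵢ`. -/
def Cmat (α : ℝ) (h : Fin K → Fin N → ℂ) (B : Matrix (Fin N) (Fin N) ℂ)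
    (lam : ℝ) (μ : Fin K → ℝ) : Matrix (Fin N) (Fin N) ℂ :=
  1 - (lam : ℂ) • B + ∑ i, (μ i : ℂ) • Amat α (h i)

theorem _root_.Matrix.IsHermitian.posDef_of_re_dotProduct_mulVec_pos {𝕜 n : Type*} [RCLike 𝕜]
    [Fintype n] {M : Matrix n n 𝕜} (hM : M.IsHermitian)
    (hpos : ∀ ⦃x : n → 𝕜⦄, x ≠ 0 → 0 < RCLike.re (star x ⬝ᵥ M *ᵥ x)) : M.PosDef :=
  .of_dotProduct_mulVec_pos hM fun x hx =>
    RCLike.pos_iff.mpr ⟨hpos hx, hM.im_star_dotProduct_mulVec_self x⟩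

theorem exists_star_dotProduct_ne_zero_of_span_eq_top {ι n R : Type*} [Fintype n] [CommRing R]
    [StarRing R] [PartialOrder R] [StarOrderedRing R] [NoZeroDivisors R] {v : ι → n → R}
    (hv : Submodule.span R (Set.range v) = ⊤) {w : n → R} (hw : w ≠ 0) :
    ∃ i, star (v i) ⬝ᵥ w ≠ 0 := by
  by_contra! hvw
  have horth : ∀ u ∈ Submodule.span R (Set.range v), star w ⬝ᵥ u = 0 := by
    intro u hu
    induction hu using Submodule.span_induction with
    | mem _ hx =>
      obtain ⟨i, rfl⟩ := hx
      rw [star_dotProduct, hvw i, star_zero]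
    | zero => exact dotProduct_zero _
    | add _ _ _ _ hx hy => rw [dotProduct_add, hx, hy, add_zero]
    | smul _ _ _ hx => rw [dotProduct_smul, hx, smul_zero]
  exact hw (dotProduct_star_self_eq_zero.mp (horth w (hv ▸ Submodule.mem_top)))

lemma Hmat_isHermitian (h : Fin N → ℂ) : (Hmat h).IsHermitian := by
  simpa [Hmat] using (posSemidef_vecMulVec_star_self (star h)).isHermitian

lemma Amat_isHermitian (α : ℝ) (h : Fin N → ℂ) : (Amat α h).IsHermitian :=
  (Hmat_isHermitian h).add <|
    (isHermitian_diagonal_of_self_adjoint _ (funext fun n => (Hmat_isHermitian h).apply n n)).smul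
      (Complex.conj_ofReal α)

lemma Cmat_isHermitian (α : ℝ) (h : Fin K → Fin N → ℂ) {B : Matrix (Fin N) (Fin N) ℂ}
    (hB : B.IsHermitian) (lam : ℝ) (μ : Fin K → ℝ) : (Cmat α h B lam μ).IsHermitian :=
  (isHermitian_one.sub (hB.smul (Complex.conj_ofReal lam))).add <|
    isSelfAdjoint_sum _ fun i _ => (Amat_isHermitian α (h i)).smul (Complex.conj_ofReal (μ i))

theorem proposition4_part2_general
    (h : Fin K → Fin N → ℂ)
    (α : ℝ) (Γt : Fin K → ℝ) (hΓt : ∀ k, 0 < Γt k)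
    (B : Matrix (Fin N) (Fin N) ℂ) (hB : B.IsHermitian)
    (lam : ℝ) (μ : Fin K → ℝ) (hμ : ∀ k, 0 < μ k)
    (hspan : Submodule.span ℂ (Set.range h) = ⊤)
    (hdual : ∀ k, ∀ wv : Fin N → ℂ,
      μ k * Γt k * Complex.normSq (star (h k) ⬝ᵥ wv) ≤
        (star wv ⬝ᵥ (Cmat α h B lam μ).mulVec wv).re) :
    (Cmat α h B lam μ).PosDef := by
  refine (Cmat_isHermitian α h hB lam μ).posDef_of_re_dotProduct_mulVec_pos fun w hw => ?_
  obtain ⟨k, hk⟩ := exists_star_dotProduct_ne_zero_of_span_eq_top hspan hw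
  exact (mul_pos (mul_pos (hμ k) (hΓt k)) (Complex.normSq_pos.mpr hk)).trans_le (hdual k w)

/-- **Proposition 4, part 2.**  If `μ_k > 0` for every `k`, the vectors `h_1, …, h_K` span
`ℂ^N`, and `μ` is feasible for the dual problem (D2), then `C(λ,μ)` is positive definite. -/
theorem proposition4_part2
    (h : Fin K → Fin N → ℂ) (hh : ∀ k, h k ≠ 0)
    (α : ℝ) (hα : 0 < α) (Γt : Fin K → ℝ) (hΓt : ∀ k, 0 < Γt k)
    (B : Matrix (Fin N) (Fin N) ℂ) (hB : B.IsHermitian)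
    (lam : ℝ) (μ : Fin K → ℝ) (hμ : ∀ k, 0 < μ k)
    (hspan : Submodule.span ℂ (Set.range h) = ⊤)
    (hdual : ∀ k, ∀ wv : Fin N → ℂ,
      μ k * Γt k * Complex.normSq (star (h k) ⬝ᵥ wv) ≤
        (star wv ⬝ᵥ (Cmat α h B lam μ).mulVec wv).re) :
    (Cmat α h B lam μ).PosDef :=
  proposition4_part2_general h α Γt hΓt B hB lam μ hμ hspan hdual

end DualPD
end
end

section
/- (Proposition 5, active SINR constraints at the optimum of (D3)) Let λ ∈ ℝ and define the feasible set F ≜ { μ ∈ ℝ^K : μ ≥ 0, C(λ,μ) is positive definite, and f_k(λ,μ) ≤ 1/Γ̃_k for every k }. If μ* ∈ F satisfies Σ_{k=1}^K μ_k ≤ Σ_{k=1}^K μ*_k for every μ ∈ F (i.e., μ* maximizes the dual objective σ_v²·Σ_k μ_k over F), then f_k(λ,μ*) = 1/Γ̃_k for every k = 1,…,K. -/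
/-!
If the `k`-th constraint were slack at `μ*`, raise `μ*_k` by `ε > 0`. This adds the positive
semidefinite matrix `ε A_k` to `C`, and matrix inversion is operator antitone, so every
quadratic form `Re(h_jᴴ C⁻¹ h_j)` can only decrease: the constraints `j ≠ k` stay satisfied,
and the `k`-th one still holds for `ε` chosen to close the gap measured at `μ*`. The new point
is feasible with a larger objective, contradicting the optimality of `μ*`.
-/

open Matrix Finset ComplexOrder

noncomputable section

namespace ActiveD3

variable {N K : ℕ}

/-- `H_k = h_k h_kᴴ`. -/
def Hmat (h : Fin N → ℂ) : Matrix (Fin N) (Fin N) ℂ :=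
  vecMulVec h (star h)

/-- `A_k = H_k + α·diag(H_k)`. -/
def Amat (α : ℝ) (h : Fin N → ℂ) : Matrix (Fin N) (Fin N) ℂ :=
  Hmat h + (α : ℂ) • diagonal (fun n => Hmat h n n)

/-- `C(λ,μ) = I − λ·B + ∑ᵢ μᵢ·Aᵢ`. -/
def Cmat (α : ℝ) (h : Fin K → Fin N → ℂ) (B : Matrix (Fin N) (Fin N) ℂ)
    (lam : ℝ) (μ : Fin K → ℝ) : Matrix (Fin N) (Fin N) ℂ :=
  1 - (lam : ℂ) • B + ∑ i, (μ i : ℂ) • Amat α (h i)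

/-- `f_k(λ,μ) = μ_k · Re(h_kᴴ C(λ,μ)⁻¹ h_k)`. -/
def fdual (α : ℝ) (h : Fin K → Fin N → ℂ) (B : Matrix (Fin N) (Fin N) ℂ)
    (lam : ℝ) (μ : Fin K → ℝ) (k : Fin K) : ℝ :=
  μ k * (star (h k) ⬝ᵥ ((Cmat α h B lam μ)⁻¹).mulVec (h k)).re

/-- The feasible set of problem (D3). -/
def FeasD3 (α : ℝ) (Γt : Fin K → ℝ) (h : Fin K → Fin N → ℂ)
    (B : Matrix (Fin N) (Fin N) ℂ) (lam : ℝ) : Set (Fin K → ℝ) :=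
  {μ | (∀ k, 0 ≤ μ k) ∧ (Cmat α h B lam μ).PosDef ∧
    ∀ k, fdual α h B lam μ k ≤ 1 / Γt k}

section LoewnerInverse

open scoped MatrixOrder Matrix.Norms.L2Operator

variable {n : Type*} [Fintype n] [DecidableEq n]

theorem _root_.Matrix.PosDef.inv_add_le_inv {C D : Matrix n n ℂ} (hC : C.PosDef)
    (hD : D.PosSemidef) : (C + D)⁻¹ ≤ C⁻¹ := by
  simp only [nonsing_inv_eq_ringInverse]
  exact CStarAlgebra.ringInverse_le_ringInverse (le_add_of_nonneg_right hD.nonneg)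
    hC.isStrictlyPositive

theorem _root_.Matrix.PosDef.re_dotProduct_inv_add_mulVec_le {C D : Matrix n n ℂ}
    (hC : C.PosDef) (hD : D.PosSemidef) (x : n → ℂ) :
    (star x ⬝ᵥ (C + D)⁻¹ *ᵥ x).re ≤ (star x ⬝ᵥ C⁻¹ *ᵥ x).re := by
  have := (le_iff.mp (hC.inv_add_le_inv hD)).re_dotProduct_nonneg x
  rwa [sub_mulVec, dotProduct_sub, map_sub, sub_nonneg] at this

end LoewnerInverse

def invQuad (α : ℝ) (h : Fin K → Fin N → ℂ) (B : Matrix (Fin N) (Fin N) ℂ)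
    (lam : ℝ) (μ : Fin K → ℝ) (k : Fin K) : ℝ :=
  (star (h k) ⬝ᵥ (Cmat α h B lam μ)⁻¹ *ᵥ h k).re

theorem fdual_eq_mul_invQuad (α : ℝ) (h : Fin K → Fin N → ℂ) (B : Matrix (Fin N) (Fin N) ℂ)
    (lam : ℝ) (μ : Fin K → ℝ) (k : Fin K) :
    fdual α h B lam μ k = μ k * invQuad α h B lam μ k :=
  rfl

theorem Amat_posSemidef {α : ℝ} (hα : 0 ≤ α) (h : Fin N → ℂ) : (Amat α h).PosSemidef := by
  refine (posSemidef_vecMulVec_self_star h).add (PosSemidef.smul (PosSemidef.diagonal ?_) ?_)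
  · intro i
    simpa [Hmat, vecMulVec_apply] using mul_star_self_nonneg (h i)
  · exact_mod_cast hα

theorem Cmat_add_single (α : ℝ) (h : Fin K → Fin N → ℂ) (B : Matrix (Fin N) (Fin N) ℂ)
    (lam : ℝ) (μ : Fin K → ℝ) (k : Fin K) (ε : ℝ) :
    Cmat α h B lam (μ + Pi.single k ε) = Cmat α h B lam μ + (ε : ℂ) • Amat α (h k) := by
  have hsingle : ∑ i, ((Pi.single k ε : Fin K → ℝ) i : ℂ) • Amat α (h i)
      = (ε : ℂ) • Amat α (h k) :=
    (Fintype.sum_eq_single k fun i hi => by simp [hi]).trans (by simp)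
  simp only [Cmat, Pi.add_apply, Complex.ofReal_add, add_smul, Finset.sum_add_distrib, hsingle,
    add_assoc]

theorem Cmat_add_single_posDef {α : ℝ} (hα : 0 ≤ α) {h : Fin K → Fin N → ℂ}
    {B : Matrix (Fin N) (Fin N) ℂ} {lam : ℝ} {μ : Fin K → ℝ} (hC : (Cmat α h B lam μ).PosDef)
    (k : Fin K) {ε : ℝ} (hε : 0 ≤ ε) : (Cmat α h B lam (μ + Pi.single k ε)).PosDef := by
  rw [Cmat_add_single]
  exact hC.add_posSemidef ((Amat_posSemidef hα (h k)).smul (by exact_mod_cast hε))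

theorem invQuad_add_single_le {α : ℝ} (hα : 0 ≤ α) {h : Fin K → Fin N → ℂ}
    {B : Matrix (Fin N) (Fin N) ℂ} {lam : ℝ} {μ : Fin K → ℝ} (hC : (Cmat α h B lam μ).PosDef)
    (k : Fin K) {ε : ℝ} (hε : 0 ≤ ε) (j : Fin K) :
    invQuad α h B lam (μ + Pi.single k ε) j ≤ invQuad α h B lam μ j := by
  rw [invQuad, invQuad, Cmat_add_single]
  exact hC.re_dotProduct_inv_add_mulVec_le
    ((Amat_posSemidef hα (h k)).smul (by exact_mod_cast hε)) (h j)

theorem add_single_mem_FeasD3 {α : ℝ} (hα : 0 ≤ α) {Γt : Fin K → ℝ} {h : Fin K → Fin N → ℂ}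
    {B : Matrix (Fin N) (Fin N) ℂ} {lam : ℝ} {μ : Fin K → ℝ} (hμ : μ ∈ FeasD3 α Γt h B lam)
    {k : Fin K} {ε : ℝ} (hε : 0 ≤ ε) (hk : (μ k + ε) * invQuad α h B lam μ k ≤ 1 / Γt k) :
    μ + Pi.single k ε ∈ FeasD3 α Γt h B lam := by
  obtain ⟨hμ0, hC, hf⟩ := hμ
  have hμ'0 : ∀ j, 0 ≤ (μ + Pi.single k ε : Fin K → ℝ) j :=
    fun j => add_nonneg (hμ0 j) ((Pi.single_nonneg.2 hε : (0 : Fin K → ℝ) ≤ Pi.single k ε) j)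
  refine ⟨hμ'0, Cmat_add_single_posDef hα hC k hε, fun j => ?_⟩
  rw [fdual_eq_mul_invQuad]
  refine (mul_le_mul_of_nonneg_left (invQuad_add_single_le hα hC k hε j) (hμ'0 j)).trans ?_
  rcases eq_or_ne j k with rfl | hjk
  · simpa using hk
  · simpa only [Pi.add_apply, Pi.single_eq_of_ne hjk, add_zero, ← fdual_eq_mul_invQuad]
      using hf j

theorem proposition5_general
    (h : Fin K → Fin N → ℂ) (hh : ∀ k, h k ≠ 0)
    (α : ℝ) (hα : 0 < α) (Γt : Fin K → ℝ)
    (B : Matrix (Fin N) (Fin N) ℂ) (lam : ℝ)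
    (μstar : Fin K → ℝ) (hmem : μstar ∈ FeasD3 α Γt h B lam)
    (hopt : ∀ μ ∈ FeasD3 α Γt h B lam, ∑ k, μ k ≤ ∑ k, μstar k) :
    ∀ k, fdual α h B lam μstar k = 1 / Γt k := by
  intro k
  by_contra hne
  have hslack := lt_of_le_of_ne (hmem.2.2 k) hne
  have hq : 0 < invQuad α h B lam μstar k := hmem.2.1.inv.re_dotProduct_pos (hh k)
  set ε := (1 / Γt k - fdual α h B lam μstar k) / invQuad α h B lam μstar k
  have hε : 0 < ε := div_pos (sub_pos.2 hslack) hq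
  have hk : (μstar k + ε) * invQuad α h B lam μstar k = 1 / Γt k := by
    rw [add_mul, div_mul_cancel₀ _ hq.ne', ← fdual_eq_mul_invQuad]
    ring
  have hsum := hopt _ (add_single_mem_FeasD3 hα.le hmem hε.le hk.le)
  simp only [Pi.add_apply, Finset.sum_add_distrib, Finset.sum_pi_single', Finset.mem_univ,
    if_true] at hsum
  linarith

/-- **Proposition 5 (active SINR constraints at the optimum of (D3)).**  If `μ*` maximizes
`∑ₖ μₖ` over the feasible set of (D3), then `f_k(λ,μ*) = 1/Γ̃_k` for every `k`. -/
theorem proposition5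
    (h : Fin K → Fin N → ℂ) (hh : ∀ k, h k ≠ 0)
    (α : ℝ) (hα : 0 < α) (Γt : Fin K → ℝ) (hΓt : ∀ k, 0 < Γt k)
    (B : Matrix (Fin N) (Fin N) ℂ) (hB : B.IsHermitian) (lam : ℝ)
    (μstar : Fin K → ℝ) (hmem : μstar ∈ FeasD3 α Γt h B lam)
    (hopt : ∀ μ ∈ FeasD3 α Γt h B lam, ∑ k, μ k ≤ ∑ k, μstar k) :
    ∀ k, fdual α h B lam μstar k = 1 / Γt k :=
  proposition5_general h hh α hα Γt B lam μstar hmem hopt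

end ActiveD3
end
end

section
/- (Active SINR constraints at the optimum of the UL problem (D4), Section IV) Let λ ∈ ℝ and define the feasible set G ≜ { μ ∈ ℝ^K : μ ≥ 0, C(λ,μ) is positive definite, and f_k(λ,μ) ≥ 1/Γ̃_k for every k }. If μ* ∈ G satisfies Σ_{k=1}^K μ*_k ≤ Σ_{k=1}^K μ_k for every μ ∈ G (i.e., μ* minimizes the objective σ_v²·Σ_k μ_k over G), then f_k(λ,μ*) = 1/Γ̃_k for every k = 1,…,K. -/
/-
If the `k`-th constraint were slack at the optimum, lowering `μ_k` by a small `ε > 0` would keep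
the point feasible: `C(λ, μ)` drops by `ε • A_k`, so it stays positive definite for small `ε`
(strict positivity is an open condition), and each `Re (h_jᴴ C⁻¹ h_j)` can only grow because
inversion is antitone in the Loewner order. Only the `k`-th constraint loses through the smaller
`μ_k`, and its slack absorbs that loss. The new point has a smaller objective, a contradiction.
-/

open Matrix Finset ComplexOrder

noncomputable section

namespace ActiveD4

variable {N K : ℕ}

/-- `H_k = h_k h_kᴴ`. -/
def Hmat (h : Fin N → ℂ) : Matrix (Fin N) (Fin N) ℂ :=
  vecMulVec h (star h)

/-- `A_k = H_k + α·diag(H_k)`. -/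
def Amat (α : ℝ) (h : Fin N → ℂ) : Matrix (Fin N) (Fin N) ℂ :=
  Hmat h + (α : ℂ) • diagonal (fun n => Hmat h n n)

/-- `C(λ,μ) = I − λ·B + ∑ᵢ μᵢ·Aᵢ`. -/
def Cmat (α : ℝ) (h : Fin K → Fin N → ℂ) (B : Matrix (Fin N) (Fin N) ℂ)
    (lam : ℝ) (μ : Fin K → ℝ) : Matrix (Fin N) (Fin N) ℂ :=
  1 - (lam : ℂ) • B + ∑ i, (μ i : ℂ) • Amat α (h i)

/-- `f_k(λ,μ) = μ_k · Re(h_kᴴ C(λ,μ)⁻¹ h_k)`. -/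
def fdual (α : ℝ) (h : Fin K → Fin N → ℂ) (B : Matrix (Fin N) (Fin N) ℂ)
    (lam : ℝ) (μ : Fin K → ℝ) (k : Fin K) : ℝ :=
  μ k * (star (h k) ⬝ᵥ ((Cmat α h B lam μ)⁻¹).mulVec (h k)).re

/-- The feasible set of the UL problem (D4). -/
def FeasD4 (α : ℝ) (Γt : Fin K → ℝ) (h : Fin K → Fin N → ℂ)
    (B : Matrix (Fin N) (Fin N) ℂ) (lam : ℝ) : Set (Fin K → ℝ) :=
  {μ | (∀ k, 0 ≤ μ k) ∧ (Cmat α h B lam μ).PosDef ∧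
    ∀ k, 1 / Γt k ≤ fdual α h B lam μ k}

end ActiveD4

open Filter Topology

section StrictlyPositive

variable {A : Type*} [CStarAlgebra A] [PartialOrder A] [StarOrderedRing A]

theorem IsStrictlyPositive.eventually_sub_smul {a : A} (ha : IsStrictlyPositive a) {b : A}
    (hb : IsSelfAdjoint b) : ∀ᶠ t in 𝓝 (0 : ℝ), IsStrictlyPositive (a - t • b) := by
  rcases subsingleton_or_nontrivial A with hA | hA
  · exact .of_forall fun t => Subsingleton.elim a (a - t • b) ▸ ha
  obtain ⟨r, hr, hra⟩ := (CFC.exists_pos_algebraMap_le_iff ha.isSelfAdjoint).2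
    fun x hx => ha.spectrum_pos hx
  have hnorm : Tendsto (fun t : ℝ => ‖t • b‖) (𝓝 0) (𝓝 0) := by
    simpa using ((continuous_id.smul continuous_const).norm (E := A)).tendsto (0 : ℝ)
  filter_upwards [hnorm.eventually (gt_mem_nhds hr)] with t ht
  refine (isStrictlyPositive_algebraMap (sub_pos.2 ht)).of_le ?_
  rw [map_sub]
  exact sub_le_sub hra ((IsSelfAdjoint.all t).smul hb).le_algebraMap_norm_self

end StrictlyPositive

namespace Matrix

open scoped MatrixOrder

variable {n : Type*} [Fintype n]

theorem re_dotProduct_mulVec_le_of_le {𝕜 : Type*} [RCLike 𝕜] {M M' : Matrix n n 𝕜} (h : M ≤ M')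
    (x : n → 𝕜) : RCLike.re (star x ⬝ᵥ M *ᵥ x) ≤ RCLike.re (star x ⬝ᵥ M' *ᵥ x) := by
  have := (le_iff.1 h).re_dotProduct_nonneg x
  rwa [sub_mulVec, dotProduct_sub, map_sub, sub_nonneg] at this

variable [DecidableEq n]

open scoped Norms.L2Operator in
theorem PosDef.eventually_sub_smul {M A : Matrix n n ℂ} (hM : M.PosDef) (hA : A.IsHermitian) :
    ∀ᶠ t : ℝ in 𝓝 0, (M - (t : ℂ) • A).PosDef := by
  filter_upwards [hM.isStrictlyPositive.eventually_sub_smul hA.isSelfAdjoint] with t ht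
  rw [Complex.coe_smul]
  exact ht.posDef

open scoped Norms.L2Operator in
theorem PosDef.inv_le_inv_of_le {M M' : Matrix n n ℂ} (hM' : M'.PosDef) (h : M' ≤ M) :
    M⁻¹ ≤ M'⁻¹ := by
  simpa only [nonsing_inv_eq_ringInverse] using
    CStarAlgebra.ringInverse_le_ringInverse h hM'.isStrictlyPositive

end Matrix

namespace ActiveD4

open scoped MatrixOrder

variable {N K : ℕ} {α : ℝ} {h : Fin K → Fin N → ℂ} {B : Matrix (Fin N) (Fin N) ℂ} {lam : ℝ}

theorem Amat_posSemidef (hα : 0 ≤ α) (v : Fin N → ℂ) : (Amat α v).PosSemidef := by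
  refine (posSemidef_vecMulVec_self_star v).add (.smul (PosSemidef.diagonal fun i => ?_) ?_)
  · simpa [Hmat, vecMulVec_apply] using mul_star_self_nonneg (v i)
  · exact_mod_cast hα

theorem Cmat_mono (hα : 0 ≤ α) {μ μ' : Fin K → ℝ} (hle : μ' ≤ μ) :
    Cmat α h B lam μ' ≤ Cmat α h B lam μ := by
  unfold Cmat
  gcongr with i
  · exact nonneg_iff_posSemidef.2 (Amat_posSemidef hα _)
  · exact_mod_cast hle i

theorem Cmat_sub_single (μ : Fin K → ℝ) (k : Fin K) (ε : ℝ) :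
    Cmat α h B lam (μ - Pi.single k ε) = Cmat α h B lam μ - (ε : ℂ) • Amat α (h k) := by
  have hsingle : ∑ i, ((Pi.single k ε : Fin K → ℝ) i : ℂ) • Amat α (h i) = (ε : ℂ) • Amat α (h k) :=
    (Fintype.sum_eq_single k fun i hi => by simp [hi]).trans (by simp)
  simp only [Cmat, Pi.sub_apply, Complex.ofReal_sub, sub_smul, Finset.sum_sub_distrib, hsingle]
  abel

theorem mul_re_le_fdual (hα : 0 ≤ α) {μ μ' : Fin K → ℝ} (hle : μ' ≤ μ)
    (hPD : (Cmat α h B lam μ').PosDef) {k : Fin K} (hk : 0 ≤ μ' k) :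
    μ' k * (star (h k) ⬝ᵥ (Cmat α h B lam μ)⁻¹ *ᵥ h k).re ≤ fdual α h B lam μ' k :=
  mul_le_mul_of_nonneg_left
    (re_dotProduct_mulVec_le_of_le (hPD.inv_le_inv_of_le (Cmat_mono hα hle)) _) hk

theorem sub_single_mem_FeasD4 {Γt : Fin K → ℝ} (hα : 0 ≤ α) {μ : Fin K → ℝ}
    (hμ : μ ∈ FeasD4 α Γt h B lam) {k : Fin K} {ε : ℝ} (hε : 0 ≤ ε) (hεk : ε ≤ μ k)
    (hPD : (Cmat α h B lam μ - (ε : ℂ) • Amat α (h k)).PosDef)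
    (hslack : 1 / Γt k ≤ (μ k - ε) * (star (h k) ⬝ᵥ (Cmat α h B lam μ)⁻¹ *ᵥ h k).re) :
    μ - Pi.single k ε ∈ FeasD4 α Γt h B lam := by
  obtain ⟨hnn, -, hfeas⟩ := hμ
  have hle : μ - Pi.single k ε ≤ μ := sub_le_self _ (Pi.single_nonneg.2 hε)
  have hnn' : ∀ j, 0 ≤ (μ - Pi.single k ε : Fin K → ℝ) j := by
    intro j
    rcases eq_or_ne j k with rfl | hj
    · simpa using hεk
    · simpa [hj] using hnn j
  rw [← Cmat_sub_single] at hPD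
  refine ⟨hnn', hPD, fun j => le_trans ?_ (mul_re_le_fdual hα hle hPD (hnn' j))⟩
  rcases eq_or_ne j k with rfl | hj
  · simpa using hslack
  · rw [Pi.sub_apply, Pi.single_eq_of_ne hj, sub_zero]
    exact hfeas j

theorem activeD4_general
    (h : Fin K → Fin N → ℂ)
    (α : ℝ) (hα : 0 < α) (Γt : Fin K → ℝ) (hΓt : ∀ k, 0 < Γt k)
    (B : Matrix (Fin N) (Fin N) ℂ) (lam : ℝ)
    (μstar : Fin K → ℝ) (hmem : μstar ∈ FeasD4 α Γt h B lam)
    (hopt : ∀ μ ∈ FeasD4 α Γt h B lam, ∑ k, μstar k ≤ ∑ k, μ k) :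
    ∀ k, fdual α h B lam μstar k = 1 / Γt k := by
  intro k
  refine (hmem.2.2 k).antisymm' (not_lt.1 fun hlt => ?_)
  set q := (star (h k) ⬝ᵥ (Cmat α h B lam μstar)⁻¹ *ᵥ h k).re
  have hμk : 0 < μstar k := (hmem.1 k).lt_of_ne' fun h0 => by
    have : 1 / Γt k < 0 := by simpa [fdual, h0] using hlt
    exact (one_div_pos.2 (hΓt k)).not_gt this
  have hslack : ∀ᶠ ε in 𝓝 (0 : ℝ), 1 / Γt k < (μstar k - ε) * q :=
    continuousAt_const.eventually_lt (by fun_prop) (by rw [sub_zero]; exact hlt)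
  have hsmall := (hmem.2.1.eventually_sub_smul (Amat_posSemidef hα.le (h k)).1).and
    ((eventually_lt_nhds hμk).and hslack)
  obtain ⟨ε, ⟨hPD, hεk, hslackε⟩, hε : 0 < ε⟩ :=
    ((hsmall.filter_mono nhdsWithin_le_nhds).and self_mem_nhdsWithin).exists (f := 𝓝[>] 0)
  have hsum := hopt _ (sub_single_mem_FeasD4 hα.le hmem hε.le hεk.le hPD hslackε.le)
  simp only [Pi.sub_apply, sum_sub_distrib, sum_pi_single', mem_univ, ↓reduceIte,
    le_sub_self_iff] at hsum
  exact hε.not_ge hsum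

/-- **Active SINR constraints at the optimum of the UL problem (D4), Section IV.**  If `μ*` minimizes
`∑ₖ μₖ` over the feasible set of (D4), then `f_k(λ,μ*) = 1/Γ̃_k` for every `k`. -/
theorem activeD4
    (h : Fin K → Fin N → ℂ) (hh : ∀ k, h k ≠ 0)
    (α : ℝ) (hα : 0 < α) (Γt : Fin K → ℝ) (hΓt : ∀ k, 0 < Γt k)
    (B : Matrix (Fin N) (Fin N) ℂ) (hB : B.IsHermitian) (lam : ℝ)
    (μstar : Fin K → ℝ) (hmem : μstar ∈ FeasD4 α Γt h B lam)
    (hopt : ∀ μ ∈ FeasD4 α Γt h B lam, ∑ k, μstar k ≤ ∑ k, μ k) :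
    ∀ k, fdual α h B lam μstar k = 1 / Γt k :=
  activeD4_general h α hα Γt hΓt B lam μstar hmem hopt

end ActiveD4
end
end
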